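/- arXiv:2407.08854 — 3 statements merged into one kernel-verified Lean document; each statement's English description precedes it below -/
import Mathlib

section
/- Let G be a locally finite graph and x ~ y adjacent vertices of equal degree d. Then there exists an optimal assignment φ between S₁(x) and S₁(y) (a bijection minimizing ∑_{z∈S₁(x)} d(z,φ(z))) that fixes every common neighbor of x and y; moreover, if |△(x,y)| < d − 1, there exists such an optimal assignment additionally satisfying φ(y) ≠ x. -/
open scoped Classical BigOperators

noncomputable section

namespace OllivierRicci

variable {V : Type*}

/-- A probability measure on the vertex set, given as a nonnegative function summing to 1. -/
def IsProb (μ : V → ℝ) : Prop := (∀ x, 0 ≤ μ x) ∧ HasSum μ 1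

/-- A transport plan (coupling) between two measures. -/
def IsPlan (μ₁ μ₂ : V → ℝ) (π : V → V → ℝ) : Prop :=
  (∀ x y, 0 ≤ π x y) ∧ (∀ x, HasSum (fun y => π x y) (μ₁ x)) ∧
    (∀ y, HasSum (fun x => π x y) (μ₂ y))

/-- The transport cost of a plan with respect to the shortest-path metric. -/
def cost (G : SimpleGraph V) (π : V → V → ℝ) : ℝ :=
  ∑' p : V × V, (G.dist p.1 p.2 : ℝ) * π p.1 p.2

/-- The 1-Wasserstein distance between two measures on the vertex set. -/
def W1 (G : SimpleGraph V) (μ₁ μ₂ : V → ℝ) : ℝ :=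
  sInf {c : ℝ | ∃ π : V → V → ℝ, IsPlan μ₁ μ₂ π ∧ cost G π = c}

/-- The lazy random walk measure `μ_x^α`. -/
def mu (G : SimpleGraph V) (α : ℝ) (x : V) : V → ℝ := fun z =>
  if z = x then α else if G.Adj x z then (1 - α) / ((G.neighborSet x).ncard : ℝ) else 0

/-- The `α`-Ollivier-Ricci curvature `κ_α(x,y)`. -/
def kappaAlpha (G : SimpleGraph V) (α : ℝ) (x y : V) : ℝ :=
  1 - W1 G (mu G α x) (mu G α y) / (G.dist x y : ℝ)

/-- The Lin-Lu-Yau curvature `κ(x,y) = lim_{α → 1} κ_α(x,y)/(1-α)`. -/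
def kappa (G : SimpleGraph V) (x y : V) : ℝ :=
  Filter.limUnder (nhdsWithin (1 : ℝ) (Set.Iio 1)) fun α => kappaAlpha G α x y / (1 - α)

/-- The set of common neighbors `△(x,y)`. -/
def triangleSet (G : SimpleGraph V) (x y : V) : Set V :=
  G.neighborSet x ∩ G.neighborSet y

/-- `R_x(x,y) = S₁(x) \ (△(x,y) ∪ {y})`. -/
def RxSet (G : SimpleGraph V) (x y : V) : Set V :=
  G.neighborSet x \ (triangleSet G x y ∪ {y})

/-- `R_y(x,y) = S₁(y) \ (△(x,y) ∪ {x})`. -/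
def RySet (G : SimpleGraph V) (x y : V) : Set V :=
  G.neighborSet y \ (triangleSet G x y ∪ {x})

/-- The cost `∑_{z ∈ A} d(z, φ(z))` of an assignment `φ` on the set `A`. -/
def assignCostOf (G : SimpleGraph V) (A : Set V) (φ : V → V) : ℝ :=
  ∑ᶠ z ∈ A, (G.dist z (φ z) : ℝ)

/-- The minimal cost over all assignments (bijections) between `A` and `B`. -/
def assignCost (G : SimpleGraph V) (A B : Set V) : ℝ :=
  sInf {c : ℝ | ∃ φ : V → V, Set.BijOn φ A B ∧ assignCostOf G A φ = c}

/-- `φ` is an optimal assignment between `A` and `B`. -/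
def IsOptAssign (G : SimpleGraph V) (A B : Set V) (φ : V → V) : Prop :=
  Set.BijOn φ A B ∧ assignCostOf G A φ = assignCost G A B

end OllivierRicci

/-!
If an optimal assignment `φ` moves a common neighbour `z`, let `w` be its preimage and exchange
the images of `z` and `w`: `z` becomes fixed, every point already fixed stays fixed, and by
the triangle inequality `d(w, φ z) ≤ d(w, z) + d(z, φ z)` the cost does not increase. Fixing
the common neighbours one at a time gives the first claim. If afterwards `φ y = x`, pick
`u ∈ R_x(x,y)`, which exists when `|△(x,y)| < d - 1`, and exchange the images of `y` and `u`:
the two new distances `d(y, φ u)` and `d(u, x)` are `1`, while the old ones are `d(y, x) = 1` and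
`d(u, φ u) ≥ 1`.
-/

namespace OllivierRicci

variable {V : Type*} {G : SimpleGraph V} {A B : Set V} {φ ψ : V → V}

lemma assignCost_le_assignCostOf (hψ : Set.BijOn ψ A B) :
    assignCost G A B ≤ assignCostOf G A ψ := by
  refine csInf_le ⟨0, ?_⟩ ⟨ψ, hψ, rfl⟩
  rintro c ⟨φ, -, rfl⟩
  exact finsum_nonneg fun _ => finsum_nonneg fun _ => Nat.cast_nonneg _

lemma IsOptAssign.of_assignCostOf_le (hφ : IsOptAssign G A B φ) (hψ : Set.BijOn ψ A B)
    (hle : assignCostOf G A ψ ≤ assignCostOf G A φ) : IsOptAssign G A B ψ :=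
  ⟨hψ, le_antisymm (hle.trans_eq hφ.2) (assignCost_le_assignCostOf hψ)⟩

theorem exists_isOptAssign (hA : A.Finite) (hB : B.Finite) (hAB : A.ncard = B.ncard) :
    ∃ φ, IsOptAssign G A B φ := by
  obtain ⟨φ₀, hφ₀⟩ : ∃ φ₀ : V → V, Set.BijOn φ₀ A B := by
    cases isEmpty_or_nonempty V
    · exact ⟨id, by simp [Set.eq_empty_of_isEmpty A, Set.eq_empty_of_isEmpty B]⟩
    · exact hA.exists_bijOn_of_encard_eq (by rw [← hA.cast_ncard_eq, ← hB.cast_ncard_eq, hAB])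
  have : Finite A := hA.to_subtype
  have : Finite B := hB.to_subtype
  set costs := {c : ℝ | ∃ φ : V → V, Set.BijOn φ A B ∧ assignCostOf G A φ = c}
  -- every cost is that of some map `A → B` extended arbitrarily off `A`
  have hfin : costs.Finite := by
    refine (Set.finite_range fun f : A → B =>
      assignCostOf G A fun v => if h : v ∈ A then (f ⟨v, h⟩ : V) else v).subset ?_
    rintro c ⟨φ, hφ, rfl⟩
    exact ⟨fun a => ⟨φ a, hφ.mapsTo a.2⟩, finsum_mem_congr rfl fun z hz => by simp [hz]⟩
  exact Set.Nonempty.csInf_mem (s := costs) ⟨_, φ₀, hφ₀, rfl⟩ hfin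

lemma assignCostOf_comp_swap (hA : A.Finite) {a b : V} (ha : a ∈ A) (hb : b ∈ A)
    (hab : a ≠ b) :
    assignCostOf G A (φ ∘ Equiv.swap a b) + G.dist a (φ a) + G.dist b (φ b) =
      assignCostOf G A φ + G.dist a (φ b) + G.dist b (φ a) := by
  have hsub : {a, b} ⊆ hA.toFinset := by
    simp [Set.insert_subset_iff, ha, hb]
  simp only [assignCostOf, finsum_mem_eq_finite_toFinset_sum _ hA]
  rw [← Finset.sum_sdiff hsub, ← Finset.sum_sdiff hsub (f := fun z => (G.dist z (φ z) : ℝ)),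
    Finset.sum_pair hab, Finset.sum_pair hab]
  have hoff : ∀ z ∈ hA.toFinset \ {a, b}, (G.dist z ((φ ∘ Equiv.swap a b) z) : ℝ) =
      G.dist z (φ z) := by
    intro z hz
    simp only [Finset.mem_sdiff, Finset.mem_insert, Finset.mem_singleton, not_or] at hz
    simp [Equiv.swap_apply_of_ne_of_ne hz.2.1 hz.2.2]
  rw [Finset.sum_congr rfl hoff]
  simp only [Function.comp_apply, Equiv.swap_apply_left, Equiv.swap_apply_right]
  ring

lemma IsOptAssign.comp_swap (hA : A.Finite) (hφ : IsOptAssign G A B φ) {a b : V}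
    (ha : a ∈ A) (hb : b ∈ A)
    (hle : G.dist a (φ b) + G.dist b (φ a) ≤ G.dist a (φ a) + G.dist b (φ b)) :
    IsOptAssign G A B (φ ∘ Equiv.swap a b) := by
  rcases eq_or_ne a b with rfl | hab
  · simpa using hφ
  refine hφ.of_assignCostOf_le (hφ.1.comp (Equiv.bijOn_swap ha hb)) ?_
  have := assignCostOf_comp_swap (G := G) (φ := φ) hA ha hb hab
  have hle' : (G.dist a (φ b) : ℝ) + G.dist b (φ a) ≤ G.dist a (φ a) + G.dist b (φ b) := by
    exact_mod_cast hle
  linarith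

theorem IsOptAssign.exists_fixing_of_mem (hconn : G.Connected) (hA : A.Finite)
    (hφ : IsOptAssign G A B φ) {z : V} (hzA : z ∈ A) (hzB : z ∈ B) :
    ∃ ψ, IsOptAssign G A B ψ ∧ ψ z = z ∧ ∀ u, φ u = u → ψ u = u := by
  obtain ⟨w, hwA, hwz⟩ := hφ.1.surjOn hzB
  refine ⟨φ ∘ Equiv.swap z w, hφ.comp_swap hA hzA hwA ?_, by simp [hwz], fun u hu => ?_⟩
  · have := hconn.dist_triangle (u := w) (v := z) (w := φ z)
    rw [hwz, SimpleGraph.dist_self]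
    omega
  · rcases eq_or_ne u z with rfl | huz
    · simp [hwz]
    rcases eq_or_ne u w with rfl | huw
    · exact absurd (hu.symm.trans hwz) huz
    simpa [Equiv.swap_apply_of_ne_of_ne huz huw] using hu

theorem IsOptAssign.exists_fixing (hconn : G.Connected) (hA : A.Finite)
    (hφ : IsOptAssign G A B φ) {T : Set V} (hT : T ⊆ A ∩ B) :
    ∃ ψ, IsOptAssign G A B ψ ∧ ∀ z ∈ T, ψ z = z := by
  induction T, (hA.subset (hT.trans Set.inter_subset_left)) using Set.Finite.induction_on with
  | empty => exact ⟨φ, hφ, by simp⟩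
  | @insert z T _ _ ih =>
    obtain ⟨ψ, hψ, hfix⟩ := ih ((Set.subset_insert z T).trans hT)
    obtain ⟨hzA, hzB⟩ := hT (Set.mem_insert z T)
    obtain ⟨ψ', hψ', hz', hkeep⟩ := hψ.exists_fixing_of_mem hconn hA hzA hzB
    exact ⟨ψ', hψ', Set.forall_mem_insert.2 ⟨hz', fun u hu => hkeep u (hfix u hu)⟩⟩

lemma RxSet_nonempty {x y : V} (hx : (G.neighborSet x).Finite)
    (hlt : (triangleSet G x y).ncard < (G.neighborSet x).ncard - 1) : (RxSet G x y).Nonempty := by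
  rw [RxSet, Set.sdiff_nonempty]
  intro hsub
  have := Set.ncard_le_ncard hsub ((hx.subset Set.inter_subset_left).union (Set.finite_singleton y))
  have := Set.ncard_union_le (triangleSet G x y) {y}
  rw [Set.ncard_singleton] at this
  omega

theorem IsOptAssign.exists_fixing_apply_ne (hconn : G.Connected) {x y : V}
    (hx : (G.neighborSet x).Finite) (hadj : G.Adj x y)
    (hφ : IsOptAssign G (G.neighborSet x) (G.neighborSet y) φ)
    (hfix : ∀ z ∈ triangleSet G x y, φ z = z)
    (hlt : (triangleSet G x y).ncard < (G.neighborSet x).ncard - 1) :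
    ∃ ψ, IsOptAssign G (G.neighborSet x) (G.neighborSet y) ψ ∧
      (∀ z ∈ triangleSet G x y, ψ z = z) ∧ ψ y ≠ x := by
  by_cases hyx : φ y ≠ x
  · exact ⟨φ, hφ, hfix, hyx⟩
  rw [not_not] at hyx
  obtain ⟨u, huA, huTy⟩ := RxSet_nonempty hx hlt
  simp only [Set.mem_union, Set.mem_singleton_iff, not_or] at huTy
  obtain ⟨huT, huy⟩ := huTy
  have hyA : y ∈ G.neighborSet x := hadj
  have huB : φ u ∈ G.neighborSet y := hφ.1.mapsTo huA
  have hu_ne : u ≠ φ u := fun h => huT ⟨huA, h ▸ huB⟩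
  refine ⟨φ ∘ Equiv.swap y u, hφ.comp_swap hx hyA huA ?_, fun z hz => ?_, ?_⟩
  · have := hconn.pos_dist_of_ne hu_ne
    rw [hyx, SimpleGraph.dist_eq_one_iff_adj.2 huB,
      SimpleGraph.dist_eq_one_iff_adj.2 (G.adj_symm huA),
      SimpleGraph.dist_eq_one_iff_adj.2 hadj.symm]
    omega
  · have hzy : z ≠ y := fun h => G.irrefl (h ▸ hz.2)
    have hzu : z ≠ u := fun h => huT (h ▸ hz)
    simp [Equiv.swap_apply_of_ne_of_ne hzy hzu, hfix z hz]
  · simpa using fun h => huy (hφ.1.injOn huA hyA (h.trans hyx.symm))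

end OllivierRicci

/-- there is an optimal assignment between `S₁(x)` and `S₁(y)` fixing all
common neighbors; and if `|△(x,y)| < d - 1` one with additionally `φ(y) ≠ x`. -/
theorem OllivierRicci.exists_optimal_assignment_fixing_triangles {V : Type*}
    (G : SimpleGraph V) (hlf : G.LocallyFinite) (hconn : G.Connected) (x y : V)
    (hadj : G.Adj x y) (d : ℕ)
    (hdx : (G.neighborSet x).ncard = d) (hdy : (G.neighborSet y).ncard = d) :
    (∃ φ : V → V, OllivierRicci.IsOptAssign G (G.neighborSet x) (G.neighborSet y) φ ∧
        ∀ z ∈ OllivierRicci.triangleSet G x y, φ z = z) ∧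
      ((OllivierRicci.triangleSet G x y).ncard < d - 1 →
        ∃ φ : V → V, OllivierRicci.IsOptAssign G (G.neighborSet x) (G.neighborSet y) φ ∧
          (∀ z ∈ OllivierRicci.triangleSet G x y, φ z = z) ∧ φ y ≠ x) := by
  have hfin (v : V) : (G.neighborSet v).Finite := have := hlf v; Set.toFinite _
  have hx := hfin x
  obtain ⟨φ, hφ⟩ := OllivierRicci.exists_isOptAssign (G := G) hx (hfin y) (hdx.trans hdy.symm)
  obtain ⟨ψ, hψ, hfix⟩ := hφ.exists_fixing hconn hx subset_rfl
  exact ⟨⟨ψ, hψ, hfix⟩,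
    fun hlt => hψ.exists_fixing_apply_ne hconn hx hadj hfix (hdx ▸ hlt)⟩
end
end

section
/- Let G be a locally finite graph and x ~ y adjacent vertices of equal degree d with |△(x,y)| = d − 1. Then κ₀(x,y) = (d−1)/d and κ(x,y) = (d+1)/d; in particular κ₀(x,y) = κ(x,y) − 2/d. -/
open scoped Classical BigOperators

noncomputable section

namespace OllivierRicci

variable {V : Type*}

/-!
Since `|△(x,y)| = d - 1`, both `S₁(x) \ {y}` and `S₁(y) \ {x}` equal `△(x,y)`, so `μ_x^α` and
`μ_y^α` agree except at `x` and `y`, where they swap the masses `α` and `(1 - α)/d`. Moving the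
excess along the edge `xy` costs `|α - (1 - α)/d|`, and testing any plan against the indicator of
`x` or of `y` shows that no plan is cheaper. Hence `κ_α(x,y) = 1 - |α - (1 - α)/d|`, which is
`(d - 1)/d` at `α = 0` and `(1 - α)(d + 1)/d` for `α ≥ 1/2`.
-/

section Transport

variable {G : SimpleGraph V} {μ ν : V → ℝ} {π : V → V → ℝ}

lemma IsPlan.le_left (hπ : IsPlan μ ν π) (z w : V) : π z w ≤ μ z :=
  le_hasSum (hπ.2.1 z) w fun b _ => hπ.1 z b

lemma IsPlan.le_right (hπ : IsPlan μ ν π) (z w : V) : π z w ≤ ν w :=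
  le_hasSum (hπ.2.2 w) z fun b _ => hπ.1 b w

lemma IsPlan.summable_cost (hπ : IsPlan μ ν π) (hμ : μ.support.Finite) (hν : ν.support.Finite) :
    Summable fun p : V × V => (G.dist p.1 p.2 : ℝ) * π p.1 p.2 := by
  refine summable_of_ne_finset_zero (s := (hμ.prod hν).toFinset) fun p hp => ?_
  suffices π p.1 p.2 = 0 by rw [this, mul_zero]
  rw [Set.Finite.mem_toFinset, Set.mem_prod, not_and_or] at hp
  refine le_antisymm ?_ (hπ.1 _ _)
  rcases hp with hp | hp
  · exact (hπ.le_left _ _).trans (Function.notMem_support.mp hp).le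
  · exact (hπ.le_right _ _).trans (Function.notMem_support.mp hp).le

-- The plan is tested against the indicator of `v`, which is 1-Lipschitz for the graph metric.
lemma IsPlan.sub_le_cost (hG : G.Preconnected) (hπ : IsPlan μ ν π)
    (hs : Summable fun p : V × V => (G.dist p.1 p.2 : ℝ) * π p.1 p.2) (v : V) :
    μ v - ν v ≤ cost G π := by
  have hrow : HasSum (fun p : V × V => if p.1 = v then π p.1 p.2 else 0) (μ v) := by
    refine ((Prod.mk_right_injective v).hasSum_iff ?_).mp ?_
    · rintro ⟨z, w⟩ hp
      exact if_neg fun hz : z = v => hp ⟨w, by rw [hz]⟩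
    · convert hπ.2.1 v using 1
      ext w
      simp
  have hcol : HasSum (fun p : V × V => if p.2 = v then π p.1 p.2 else 0) (ν v) := by
    refine ((Prod.mk_left_injective v).hasSum_iff ?_).mp ?_
    · rintro ⟨z, w⟩ hp
      exact if_neg fun hw : w = v => hp ⟨z, by rw [hw]⟩
    · convert hπ.2.2 v using 1
      ext z
      simp
  rw [← (hrow.sub hcol).tsum_eq]
  refine Summable.tsum_le_tsum (fun ⟨z, w⟩ => ?_) (hrow.sub hcol).summable hs
  rcases eq_or_ne z w with rfl | hzw
  · simp
  · have hd : (1 : ℝ) ≤ G.dist z w := by exact_mod_cast (hG z w).pos_dist_of_ne hzw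
    have := hπ.1 z w
    split_ifs <;> nlinarith

variable {x y : V} {t : ℝ}

def transferPlan (μ ν : V → ℝ) (x y : V) (t : ℝ) : V → V → ℝ := fun z w =>
  (if z = w then min (μ z) (ν z) else 0) + if z = x ∧ w = y then t else 0

lemma isPlan_transferPlan (hμ : ∀ z, 0 ≤ μ z) (hν : ∀ z, 0 ≤ ν z) (hne : x ≠ y)
    (heq : ∀ z, z ≠ x → z ≠ y → μ z = ν z) (ht : 0 ≤ t) (hx : μ x = ν x + t)
    (hy : ν y = μ y + t) : IsPlan μ ν (transferPlan μ ν x y t) := by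
  refine ⟨fun z w => ?_, fun z => ?_, fun w => ?_⟩
  · unfold transferPlan
    have := le_min (hμ z) (hν z)
    split_ifs <;> linarith
  · have hval : min (μ z) (ν z) + (if z = x then t else 0) = μ z := by
      by_cases hzx : z = x
      · subst hzx
        rw [if_pos rfl, hx, min_eq_right (by linarith)]
      by_cases hzy : z = y
      · subst hzy
        rw [if_neg hzx, hy, min_eq_left (by linarith), add_zero]
      rw [if_neg hzx, heq z hzx hzy, min_self, add_zero]
    rw [← hval]
    refine (hasSum_ite_eq' z _).add ?_
    by_cases hzx : z = x
    · simpa [hzx] using hasSum_ite_eq y t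
    · simp [hzx]
  · have hval : min (μ w) (ν w) + (if w = y then t else 0) = ν w := by
      by_cases hwy : w = y
      · subst hwy
        rw [if_pos rfl, hy, min_eq_left (by linarith)]
      by_cases hwx : w = x
      · subst hwx
        rw [if_neg hwy, hx, min_eq_right (by linarith), add_zero]
      rw [if_neg hwy, heq w hwx hwy, min_self, add_zero]
    rw [← hval]
    refine HasSum.add ?_ ?_
    · convert hasSum_ite_eq w (min (μ w) (ν w)) using 2 with z
      split_ifs with h <;> simp [h]
    · by_cases hwy : w = y
      · simpa [hwy] using hasSum_ite_eq x t
      · simp [hwy]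

lemma cost_transferPlan (hne : x ≠ y) :
    cost G (transferPlan μ ν x y t) = t * G.dist x y := by
  have hpt : (fun p : V × V => (G.dist p.1 p.2 : ℝ) * transferPlan μ ν x y t p.1 p.2) =
      fun p => if p = (x, y) then t * G.dist x y else 0 := by
    ext ⟨z, w⟩
    rcases eq_or_ne z w with rfl | hzw
    · simp only [SimpleGraph.dist_self, Nat.cast_zero, zero_mul, Prod.mk.injEq]
      exact (if_neg fun h => hne (h.1.symm.trans h.2)).symm
    by_cases hp : z = x ∧ w = y
    · obtain ⟨rfl, rfl⟩ := hp
      simp [transferPlan, hzw, mul_comm]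
    · simp [transferPlan, hzw, hp]
  rw [cost, hpt, tsum_ite_eq]

theorem W1_eq_abs_of_eq_off_adj (hG : G.Preconnected) (hxy : G.Adj x y)
    (hμ0 : ∀ z, 0 ≤ μ z) (hν0 : ∀ z, 0 ≤ ν z) (hμ : μ.support.Finite) (hν : ν.support.Finite)
    (heq : ∀ z, z ≠ x → z ≠ y → μ z = ν z) (hbal : μ x + μ y = ν x + ν y) :
    W1 G μ ν = |μ x - ν x| := by
  have hd : (G.dist x y : ℝ) = 1 := by exact_mod_cast SimpleGraph.dist_eq_one_iff_adj.mpr hxy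
  obtain ⟨π, hπ, hcost⟩ : ∃ π, IsPlan μ ν π ∧ cost G π = |μ x - ν x| := by
    rcases le_total 0 (μ x - ν x) with h | h
    · refine ⟨_, isPlan_transferPlan hμ0 hν0 hxy.ne heq h (by ring) (by linarith),
        by rw [cost_transferPlan hxy.ne, hd, abs_of_nonneg h, mul_one]⟩
    · refine ⟨_, isPlan_transferPlan (x := y) (y := x) hμ0 hν0 hxy.ne.symm
        (fun z hzy hzx => heq z hzx hzy) (neg_nonneg.mpr h) (by linarith) (by ring), ?_⟩
      rw [cost_transferPlan hxy.ne.symm, G.dist_comm, hd, abs_of_nonpos h, mul_one]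
  refine IsLeast.csInf_eq ⟨⟨π, hπ, hcost⟩, ?_⟩
  rintro _ ⟨ρ, hρ, rfl⟩
  have hs := hρ.summable_cost (G := G) hμ hν
  have hy := hρ.sub_le_cost hG hs y
  exact abs_sub_le_iff.mpr ⟨hρ.sub_le_cost hG hs x, by linarith⟩

end Transport

section RandomWalk

variable {G : SimpleGraph V} {α : ℝ} {x y : V}

lemma mu_nonneg (h0 : 0 ≤ α) (h1 : α ≤ 1) (z : V) : 0 ≤ mu G α x z := by
  unfold mu
  split_ifs
  exacts [h0, div_nonneg (by linarith) (Nat.cast_nonneg _), le_rfl]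

lemma support_mu_subset : (mu G α x).support ⊆ insert x (G.neighborSet x) := by
  intro z hz
  by_contra h
  simp only [Set.mem_insert_iff, SimpleGraph.mem_neighborSet, not_or] at h
  exact hz (by simp [mu, h.1, h.2])

lemma mu_self : mu G α x x = α := by simp [mu]

lemma mu_of_adj (hxy : G.Adj x y) : mu G α x y = (1 - α) / (G.neighborSet x).ncard := by
  simp [mu, hxy.ne', hxy]

lemma mu_eq_mu_of_neighborSet_sdiff_eq (hnb : G.neighborSet x \ {y} = G.neighborSet y \ {x})
    (hdeg : (G.neighborSet x).ncard = (G.neighborSet y).ncard) (z : V) (hzx : z ≠ x)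
    (hzy : z ≠ y) : mu G α x z = mu G α y z := by
  have hadj : G.Adj x z ↔ G.Adj y z := by simpa [hzx, hzy] using Set.ext_iff.mp hnb z
  simp [mu, hzx, hzy, hadj, hdeg]

theorem W1_mu_eq_of_neighborSet_sdiff_eq (hG : G.Preconnected) (hxy : G.Adj x y)
    (hfx : (G.neighborSet x).Finite) (hfy : (G.neighborSet y).Finite)
    (hnb : G.neighborSet x \ {y} = G.neighborSet y \ {x})
    (hdeg : (G.neighborSet x).ncard = (G.neighborSet y).ncard) (h0 : 0 ≤ α) (h1 : α ≤ 1) :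
    W1 G (mu G α x) (mu G α y) = |α - (1 - α) / (G.neighborSet x).ncard| := by
  rw [W1_eq_abs_of_eq_off_adj hG hxy (mu_nonneg h0 h1) (mu_nonneg h0 h1)
      ((hfx.insert x).subset support_mu_subset) ((hfy.insert y).subset support_mu_subset)
      (mu_eq_mu_of_neighborSet_sdiff_eq hnb hdeg), mu_self, mu_of_adj hxy.symm, hdeg]
  rw [mu_self, mu_self, mu_of_adj hxy, mu_of_adj hxy.symm, hdeg, add_comm]

end RandomWalk

lemma triangleSet_comm (G : SimpleGraph V) (x y : V) : triangleSet G x y = triangleSet G y x :=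
  Set.inter_comm _ _

lemma triangleSet_eq_neighborSet_sdiff {G : SimpleGraph V} {x y : V}
    (hfin : (G.neighborSet x).Finite) (hxy : G.Adj x y)
    (h : (triangleSet G x y).ncard = (G.neighborSet x).ncard - 1) :
    triangleSet G x y = G.neighborSet x \ {y} := by
  refine Set.eq_of_subset_of_ncard_le
    (fun z hz => ⟨hz.1, fun hzy => G.ne_of_adj hz.2 (Set.mem_singleton_iff.mp hzy).symm⟩) ?_
    hfin.sdiff
  rw [Set.ncard_sdiff_singleton_of_mem (G.mem_neighborSet x y |>.mpr hxy), h]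

end OllivierRicci

/-- the case `|△(x,y)| = d - 1`. -/
theorem OllivierRicci.kappa_of_triangle_eq_pred {V : Type*} (G : SimpleGraph V)
    (hlf : G.LocallyFinite) (hconn : G.Connected) (x y : V) (hadj : G.Adj x y)
    (d : ℕ) (hdx : (G.neighborSet x).ncard = d) (hdy : (G.neighborSet y).ncard = d)
    (htri : (OllivierRicci.triangleSet G x y).ncard = d - 1) :
    OllivierRicci.kappaAlpha G 0 x y = ((d : ℝ) - 1) / d ∧
      OllivierRicci.kappa G x y = ((d : ℝ) + 1) / d ∧
      OllivierRicci.kappaAlpha G 0 x y = OllivierRicci.kappa G x y - 2 / d := by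
  have := hlf x
  have := hlf y
  have hfx : (G.neighborSet x).Finite := Set.toFinite _
  have hfy : (G.neighborSet y).Finite := Set.toFinite _
  have hnb : G.neighborSet x \ {y} = G.neighborSet y \ {x} := by
    rw [← triangleSet_eq_neighborSet_sdiff hfx hadj (by rw [htri, hdx]),
      ← triangleSet_eq_neighborSet_sdiff hfy hadj.symm (by rw [triangleSet_comm, htri, hdy]),
      triangleSet_comm]
  have hd : (1 : ℝ) ≤ d := by
    rw [← hdx]
    exact_mod_cast (Set.ncard_pos hfx).mpr ⟨y, hadj⟩
  have hκα : ∀ α : ℝ, 0 ≤ α → α ≤ 1 → kappaAlpha G α x y = 1 - |α - (1 - α) / d| := by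
    intro α h0 h1
    rw [kappaAlpha, W1_mu_eq_of_neighborSet_sdiff_eq hconn.preconnected hadj hfx hfy hnb
      (hdx.trans hdy.symm) h0 h1, hdx, SimpleGraph.dist_eq_one_iff_adj.mpr hadj]
    simp
  have hκ0 : kappaAlpha G 0 x y = ((d : ℝ) - 1) / d := by
    rw [hκα 0 le_rfl zero_le_one, zero_sub, abs_neg, abs_of_nonneg (by positivity)]
    field_simp
    ring
  have hκ : kappa G x y = ((d : ℝ) + 1) / d := by
    refine Filter.Tendsto.limUnder_eq (tendsto_const_nhds.congr' ?_)
    filter_upwards [Ioo_mem_nhdsLT (show (1 / 2 : ℝ) < 1 by norm_num)] with α ⟨hα0, hα1⟩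
    have hβ : (1 - α) / d ≤ α := (div_le_self (by linarith) hd).trans (by linarith)
    rw [hκα α (by linarith) hα1.le, abs_of_nonneg (by linarith)]
    field_simp [(by linarith : (1 : ℝ) - α ≠ 0)]
    ring
  exact ⟨hκ0, hκ, by rw [hκ0, hκ]; field_simp; ring⟩
end
end

section
/- Let G be a locally finite graph and x ~ y adjacent vertices of equal degree d. Then κ₀(x,y) = κ(x,y) − c/d for some c ∈ {0, 1, 2}. -/
open scoped Classical BigOperators

noncomputable section

/-!
Both curvatures are computed exactly, each time by a transport plan and a Kantorovich potential
of the same value. Let `C₀` be the optimal matching cost between `N(x)` and `N(y)`, and `C₁` the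
one between `N(x) \ {y}` and `N(y) \ {x}`. By Egerváry's theorem the matching problem has an
integral dual, which can be turned into a `1`-Lipschitz potential on the whole graph.

For `α = 0` an optimal matching and such a potential give `W₁(μ_x, μ_y) = C₀ / d`.
For `α ≥ 1 / (d + 1)` the plan matches `N(x) \ {y}` to `N(y) \ {x}` optimally, leaves mass
`(1 - α) / d` at `x` and at `y`, and moves the rest of the mass at `x` to `y`. A potential `g`
for `C₁`, reset to `g x - 1` at `y` and capped at `g x` on the common neighbours of `x` and `y`,
matches its cost, so `W₁ = α + (1 - α)(C₁ - 1) / d` and `κ = 1 - (C₁ - 1) / d`.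
Hence `κ₀ = κ - (C₀ + 1 - C₁) / d`, and duality once more shows that adding the pair `(y, x)`
changes the matching cost by at most `d(x, y) = 1`, so `C₀ + 1 - C₁ ∈ {0, 1, 2}`.
-/

namespace OllivierRicci

open Finset

section Matching

variable {V : Type*} (c : V → V → ℕ)

def matchingCost (P : Finset V) (f : V → V) : ℕ := ∑ a ∈ P, c a (f a)

/-- Junk value `0` unless `P.card = Q.card`. -/
def minMatchingCost (P Q : Finset V) : ℕ :=
  sInf {n | ∃ f : V → V, Set.BijOn f P Q ∧ matchingCost c P f = n}

variable {c} {P Q : Finset V}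

lemma exists_bijOn_of_card_eq (h : P.card = Q.card) : ∃ f : V → V, Set.BijOn f P Q := by
  rcases isEmpty_or_nonempty V with _ | _
  · exact ⟨id, Subsingleton.elim P Q ▸ Set.bijOn_id _⟩
  · exact P.finite_toSet.exists_bijOn_of_encard_eq (by simp [Set.encard_coe_eq_coe_finsetCard, h])

lemma minMatchingCost_le {f : V → V} (hf : Set.BijOn f P Q) :
    minMatchingCost c P Q ≤ matchingCost c P f :=
  Nat.sInf_le ⟨f, hf, rfl⟩

lemma exists_matchingCost_eq_min (h : P.card = Q.card) :
    ∃ f : V → V, Set.BijOn f P Q ∧ matchingCost c P f = minMatchingCost c P Q := by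
  obtain ⟨f, hf⟩ := exists_bijOn_of_card_eq h
  exact Nat.sInf_mem (s := {n | ∃ f : V → V, Set.BijOn f P Q ∧ matchingCost c P f = n})
    ⟨_, f, hf, rfl⟩

lemma sum_sub_sum_eq_of_bijOn {f : V → V} (hf : Set.BijOn f P Q) (u v : V → ℤ) :
    ∑ a ∈ P, u a - ∑ b ∈ Q, v b = ∑ a ∈ P, (u a - v (f a)) := by
  rw [← sum_nbij f hf.mapsTo hf.injOn hf.surjOn fun _ _ => rfl, ← sum_sub_distrib]

lemma sum_sub_sum_le_matchingCost {f : V → V} (hf : Set.BijOn f P Q) {u v : V → ℤ}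
    (huv : ∀ a ∈ P, ∀ b ∈ Q, u a - v b ≤ c a b) :
    ∑ a ∈ P, u a - ∑ b ∈ Q, v b ≤ matchingCost c P f := by
  rw [sum_sub_sum_eq_of_bijOn hf, matchingCost, Nat.cast_sum]
  exact sum_le_sum fun a ha => huv a ha (f a) (hf.mapsTo ha)

lemma sum_sub_sum_le_minMatchingCost (h : P.card = Q.card) {u v : V → ℤ}
    (huv : ∀ a ∈ P, ∀ b ∈ Q, u a - v b ≤ c a b) :
    ∑ a ∈ P, u a - ∑ b ∈ Q, v b ≤ minMatchingCost c P Q := by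
  obtain ⟨f, hf, hfc⟩ := exists_matchingCost_eq_min (c := c) h
  exact hfc ▸ sum_sub_sum_le_matchingCost hf huv

lemma exists_bijOn_of_hall (h : P.card = Q.card) {t : P → Finset V} (ht : ∀ a, t a ⊆ Q)
    (hall : ∀ s : Finset P, s.card ≤ (s.biUnion t).card) :
    ∃ f : V → V, Set.BijOn f P Q ∧ ∀ a : P, f a ∈ t a := by
  obtain ⟨g, hinj, hg⟩ := (all_card_le_biUnion_card_iff_exists_injective t).mp hall
  set f : V → V := fun a => if ha : a ∈ P then g ⟨a, ha⟩ else a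
  have hfg : ∀ a : P, f a = g a := fun a => dif_pos a.2
  have hmaps : Set.MapsTo f P Q := fun a ha => hfg ⟨a, ha⟩ ▸ ht _ (hg _)
  have hinjOn : Set.InjOn f P := fun a ha b hb hab =>
    congrArg Subtype.val (hinj ((hfg ⟨a, ha⟩).symm.trans (hab.trans (hfg ⟨b, hb⟩))))
  exact ⟨f, ⟨hmaps, hinjOn, surjOn_of_injOn_of_card_le f hmaps hinjOn h.ge⟩,
    fun a => hfg a ▸ hg a⟩

lemma sum_add_ite_mem {S R : Finset V} (hS : S ⊆ R) (w : V → ℤ) :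
    ∑ a ∈ R, (w a + if a ∈ S then 1 else 0) = ∑ a ∈ R, w a + S.card := by
  rw [sum_add_distrib, sum_boole, filter_mem_eq_inter, inter_eq_right.mpr hS]

/-- Raise `u` by one on the Hall-deficient set `s` and `v` by one on its tight neighbourhood. -/
lemma exists_dual_gt_of_not_hall {u v : V → ℤ} (huv : ∀ a ∈ P, ∀ b ∈ Q, u a - v b ≤ c a b)
    (s : Finset P) (hs : (s.biUnion fun a => Q.filter fun b => u a - v b = c a b).card < s.card) :
    ∃ u' v' : V → ℤ, (∀ a ∈ P, ∀ b ∈ Q, u' a - v' b ≤ c a b) ∧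
      ∑ a ∈ P, u a - ∑ b ∈ Q, v b < ∑ a ∈ P, u' a - ∑ b ∈ Q, v' b := by
  set N := s.biUnion fun a => Q.filter fun b => u a - v b = c a b
  set S := s.map (Function.Embedding.subtype (· ∈ P))
  have hSP : S ⊆ P := fun a ha => by
    obtain ⟨a, -, rfl⟩ := mem_map.mp ha
    exact a.2
  have hNQ : N ⊆ Q := biUnion_subset.mpr fun _ _ => filter_subset _ _
  refine ⟨fun a => u a + if a ∈ S then 1 else 0, fun b => v b + if b ∈ N then 1 else 0,
    fun a ha b hb => ?_, ?_⟩
  · have := huv a ha b hb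
    by_cases haS : a ∈ S
    · by_cases hbN : b ∈ N
      · simp only [haS, hbN, if_true]
        omega
      · obtain ⟨a', ha's, rfl⟩ := mem_map.mp haS
        have hslack : u a' - v b ≠ c a' b := fun heq =>
          hbN (mem_biUnion.mpr ⟨a', ha's, mem_filter.mpr ⟨hb, heq⟩⟩)
        simp only [hbN, if_false, Function.Embedding.coe_subtype] at this ⊢
        omega
    · simp only [haS, if_false]
      split_ifs <;> omega
  · rw [sum_add_ite_mem hSP, sum_add_ite_mem hNQ, card_map]
    omega

/-- Egerváry's theorem: the assignment problem with integer costs has an integral optimal dual. -/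
theorem exists_dual_eq_minMatchingCost (h : P.card = Q.card) :
    ∃ u v : V → ℤ, (∀ a ∈ P, ∀ b ∈ Q, u a - v b ≤ c a b) ∧
      ∑ a ∈ P, u a - ∑ b ∈ Q, v b = minMatchingCost c P Q := by
  obtain ⟨_, ⟨u, v, huv, rfl⟩, hmax⟩ := Int.exists_greatest_of_bdd
    (P := fun m => ∃ u v : V → ℤ, (∀ a ∈ P, ∀ b ∈ Q, u a - v b ≤ c a b) ∧
      ∑ a ∈ P, u a - ∑ b ∈ Q, v b = m)
    ⟨_, by rintro _ ⟨u, v, huv, rfl⟩; exact sum_sub_sum_le_minMatchingCost h huv⟩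
    ⟨0, 0, 0, by simp, by simp⟩
  refine ⟨u, v, huv, le_antisymm (sum_sub_sum_le_minMatchingCost h huv) ?_⟩
  by_cases hall : ∀ s : Finset P,
      s.card ≤ (s.biUnion fun a => Q.filter fun b => u a - v b = c a b).card
  · obtain ⟨f, hf, htight⟩ := exists_bijOn_of_hall h (fun _ => filter_subset _ _) hall
    calc (minMatchingCost c P Q : ℤ) ≤ matchingCost c P f := by
          exact_mod_cast minMatchingCost_le hf
      _ = ∑ a ∈ P, u a - ∑ b ∈ Q, v b := by
          rw [sum_sub_sum_eq_of_bijOn hf, matchingCost, Nat.cast_sum]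
          exact sum_congr rfl fun a ha => ((mem_filter.mp (htight ⟨a, ha⟩)).2).symm
  · push Not at hall
    obtain ⟨s, hs⟩ := hall
    obtain ⟨u', v', huv', hlt⟩ := exists_dual_gt_of_not_hall huv s hs
    exact absurd (hmax _ ⟨u', v', huv', rfl⟩) hlt.not_ge

end Matching

section Potential

variable {V : Type*} {G : SimpleGraph V} {P Q : Finset V}

theorem exists_lipschitz_potential (hconn : G.Connected) (h : P.card = Q.card) :
    ∃ g : V → ℤ, (∀ v w, g v - g w ≤ G.dist v w) ∧
      ∑ a ∈ P, g a - ∑ b ∈ Q, g b = minMatchingCost G.dist P Q := by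
  obtain ⟨u, v, huv, hval⟩ := exists_dual_eq_minMatchingCost (c := G.dist) h
  rcases P.eq_empty_or_nonempty with rfl | hP
  · rw [eq_comm, card_empty, card_eq_zero] at h
    subst h
    exact ⟨0, fun v w => by simp, by simpa using hval⟩
  -- The smallest `1`-Lipschitz function above `u` on `P`; feasibility keeps it below `v` on `Q`.
  set g : V → ℤ := fun w => P.sup' hP fun a => u a - G.dist a w
  have hlip : ∀ v w, g v - g w ≤ G.dist v w := fun v w => by
    suffices g v ≤ g w + G.dist v w by omega
    refine sup'_le _ _ fun a ha => ?_
    have : u a - G.dist a w ≤ g w := le_sup' (fun a => u a - (G.dist a w : ℤ)) ha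
    have : G.dist a w ≤ G.dist a v + G.dist v w := hconn.dist_triangle
    omega
  have hu : ∀ a ∈ P, u a ≤ g a := fun a ha => by
    simpa using le_sup' (fun a' => u a' - (G.dist a' a : ℤ)) ha
  have hv : ∀ b ∈ Q, g b ≤ v b := fun b hb =>
    sup'_le _ _ fun a ha => by have := huv a ha b hb; omega
  refine ⟨g, hlip, le_antisymm (sum_sub_sum_le_minMatchingCost h fun a _ b _ => hlip a b) ?_⟩
  rw [← hval]
  exact sub_le_sub (sum_le_sum hu) (sum_le_sum hv)

lemma minMatchingCost_insert_le (hconn : G.Connected) {a b : V} (ha : a ∉ P) (hb : b ∉ Q)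
    (h : P.card = Q.card) :
    minMatchingCost G.dist (insert a P) (insert b Q) ≤ minMatchingCost G.dist P Q + G.dist a b := by
  obtain ⟨g, hlip, hg⟩ :=
    exists_lipschitz_potential (P := insert a P) (Q := insert b Q) hconn
      (by rw [card_insert_of_notMem ha, card_insert_of_notMem hb, h])
  rw [sum_insert ha, sum_insert hb] at hg
  have := sum_sub_sum_le_minMatchingCost h fun a _ b _ => hlip a b
  have := hlip a b
  omega

lemma minMatchingCost_le_insert (hconn : G.Connected) {a b : V} (ha : a ∉ P) (hb : b ∉ Q)
    (h : P.card = Q.card) :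
    minMatchingCost G.dist P Q ≤ minMatchingCost G.dist (insert a P) (insert b Q) + G.dist a b := by
  obtain ⟨g, hlip, hg⟩ := exists_lipschitz_potential hconn h
  have := sum_sub_sum_le_minMatchingCost (c := G.dist) (P := insert a P) (Q := insert b Q)
    (by rw [card_insert_of_notMem ha, card_insert_of_notMem hb, h]) fun a _ b _ => hlip a b
  rw [sum_insert ha, sum_insert hb] at this
  have := hlip b a
  rw [G.dist_comm] at this
  omega

end Potential

section EdgePotential

variable {V : Type*} {G : SimpleGraph V} {x y : V} {g : V → ℤ}

lemma two_le_dist (hconn : G.Connected) {u v : V} (hne : u ≠ v) (hnadj : ¬ G.Adj u v) :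
    2 ≤ G.dist u v := by
  have := hconn.pos_dist_of_ne hne
  have : G.dist u v ≠ 1 := fun h => hnadj (SimpleGraph.dist_eq_one_iff_adj.mp h)
  omega

def edgePotential (G : SimpleGraph V) (x y : V) (g : V → ℤ) (w : V) : ℤ :=
  if w = y then g x - 1 else if G.Adj x w ∧ G.Adj y w then min (g x) (g w) else g w

lemma edgePotential_left (hxy : x ≠ y) : edgePotential G x y g x = g x := by
  simp [edgePotential, hxy]

lemma edgePotential_right : edgePotential G x y g y = g x - 1 := by
  simp [edgePotential]

lemma edgePotential_le {w : V} (hw : w ≠ y) : edgePotential G x y g w ≤ g w := by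
  unfold edgePotential
  split_ifs
  exacts [absurd ‹w = y› hw, min_le_right _ _, le_rfl]

lemma min_le_edgePotential {w : V} (hw : w ≠ y) :
    min (g x) (g w) ≤ edgePotential G x y g w := by
  unfold edgePotential
  split_ifs
  exacts [absurd ‹w = y› hw, le_rfl, min_le_right _ _]

lemma edgePotential_le_left {w : V} (hxw : w = x ∨ G.Adj x w) (hyw : G.Adj y w) :
    edgePotential G x y g w ≤ g x := by
  unfold edgePotential
  split_ifs with hwy hcommon
  · omega
  · exact min_le_left _ _
  · obtain rfl : w = x := hxw.resolve_right fun hxw => hcommon ⟨hxw, hyw⟩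
    exact le_rfl

/-- Only the pairs in `supp μ_x × supp μ_y` enter the duality bound `sum_sub_sum_le_cost`. -/
lemma edgePotential_sub_le_dist (hconn : G.Connected) (hadj : G.Adj x y)
    (hg : ∀ v w, g v - g w ≤ G.dist v w) {a b : V} (ha : a = x ∨ G.Adj x a)
    (hb : b = y ∨ G.Adj y b) :
    edgePotential G x y g a - edgePotential G x y g b ≤ G.dist a b := by
  have hxy : G.dist x y = 1 := SimpleGraph.dist_eq_one_iff_adj.mpr hadj
  have hax : g a - g x ≤ 1 := by
    rcases ha with rfl | hxa
    · omega
    · simpa [SimpleGraph.dist_eq_one_iff_adj.mpr hxa.symm] using hg a x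
  rcases eq_or_ne a b with rfl | hab
  · simp
  by_cases hby : b = y
  · rw [hby] at hab ⊢
    rw [edgePotential_right]
    by_cases hay : G.Adj a y
    · have := edgePotential_le_left (g := g) ha hay.symm
      have := hconn.pos_dist_of_ne hab
      omega
    · have := edgePotential_le (G := G) (x := x) (g := g) hab
      have := two_le_dist hconn hab hay
      omega
  have hyb : G.Adj y b := hb.resolve_left hby
  have hmin := min_le_edgePotential (G := G) (x := x) (g := g) hby
  rcases eq_or_ne a y with rfl | hay
  · have : G.dist x b ≤ G.dist x a + G.dist a b := hconn.dist_triangle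
    have := hg x b
    rw [edgePotential_right, SimpleGraph.dist_eq_one_iff_adj.mpr hyb] at *
    omega
  · have := edgePotential_le (G := G) (x := x) (g := g) hay
    have := hg a b
    have := hconn.pos_dist_of_ne hab
    omega

variable [Fintype (G.neighborSet x)] [Fintype (G.neighborSet y)]

lemma sum_edgePotential {S : Finset V} (hyS : y ∉ S)
    (hS : G.neighborFinset x ∩ G.neighborFinset y ⊆ S) :
    ∑ a ∈ S, edgePotential G x y g a = ∑ a ∈ S, g a +
      ∑ a ∈ G.neighborFinset x ∩ G.neighborFinset y, (edgePotential G x y g a - g a) := by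
  rw [← sub_eq_iff_eq_add', ← sum_sub_distrib, eq_comm]
  refine sum_subset hS fun a haS ha => ?_
  have ha' : ¬(G.Adj x a ∧ G.Adj y a) := by simpa using ha
  simp [edgePotential, ne_of_mem_of_not_mem haS hyS, ha']

lemma sum_edgePotential_sub_sum (hadj : G.Adj x y) :
    ∑ a ∈ G.neighborFinset x, edgePotential G x y g a -
        ∑ b ∈ G.neighborFinset y, edgePotential G x y g b =
      ∑ a ∈ (G.neighborFinset x).erase y, g a - ∑ b ∈ (G.neighborFinset y).erase x, g b - 1 := by
  have hT : G.neighborFinset x ∩ G.neighborFinset y ⊆ (G.neighborFinset x).erase y := fun a ha =>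
    mem_erase.mpr ⟨fun h => by simp [h] at ha, (mem_inter.mp ha).1⟩
  have hT' : G.neighborFinset x ∩ G.neighborFinset y ⊆ (G.neighborFinset y).erase x := fun a ha =>
    mem_erase.mpr ⟨fun h => by simp [h] at ha, (mem_inter.mp ha).2⟩
  rw [← add_sum_erase _ _ (G.mem_neighborFinset x y |>.mpr hadj),
    ← add_sum_erase _ _ (G.mem_neighborFinset y x |>.mpr hadj.symm),
    sum_edgePotential (notMem_erase y _) hT, sum_edgePotential ?_ hT', edgePotential_right,
    edgePotential_left hadj.ne]
  · ring
  · simp [hadj.ne']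

end EdgePotential

section Transport

variable {V : Type*} {G : SimpleGraph V} {μ₁ μ₂ ν₁ ν₂ : V → ℝ} {π π' : V → V → ℝ}

lemma IsPlan.add (h : IsPlan μ₁ μ₂ π) (h' : IsPlan ν₁ ν₂ π') :
    IsPlan (μ₁ + ν₁) (μ₂ + ν₂) (π + π') :=
  ⟨fun a b => add_nonneg (h.1 a b) (h'.1 a b), fun a => (h.2.1 a).add (h'.2.1 a),
    fun b => (h.2.2 b).add (h'.2.2 b)⟩

lemma IsPlan.eq_zero_of_left (h : IsPlan μ₁ μ₂ π) {a : V} (ha : μ₁ a = 0) (b : V) :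
    π a b = 0 :=
  le_antisymm (ha ▸ le_hasSum (h.2.1 a) b fun c _ => h.1 a c) (h.1 a b)

lemma IsPlan.eq_zero_of_right (h : IsPlan μ₁ μ₂ π) {b : V} (hb : μ₂ b = 0) (a : V) :
    π a b = 0 :=
  le_antisymm (hb ▸ le_hasSum (h.2.2 b) a fun c _ => h.1 c b) (h.1 a b)

lemma sum_sub_sum_le_cost {S T : Finset V} (hS : ∀ a ∉ S, μ₁ a = 0) (hT : ∀ b ∉ T, μ₂ b = 0)
    {f : V → ℝ} (hf : ∀ a ∈ S, ∀ b ∈ T, f a - f b ≤ G.dist a b) (h : IsPlan μ₁ μ₂ π) :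
    ∑ a ∈ S, f a * μ₁ a - ∑ b ∈ T, f b * μ₂ b ≤ cost G π := by
  have hπ : ∀ a b, π a b ≠ 0 → a ∈ S ∧ b ∈ T := fun a b hab => by
    by_contra hn
    rcases not_and_or.mp hn with ha | hb
    exacts [hab (h.eq_zero_of_left (hS a ha) b), hab (h.eq_zero_of_right (hT b hb) a)]
  have hμ₁ : ∀ a, μ₁ a = ∑ b ∈ T, π a b := fun a =>
    (h.2.1 a).unique (hasSum_sum_of_ne_finset_zero fun b hb => by_contra fun h => hb (hπ a b h).2)
  have hμ₂ : ∀ b, μ₂ b = ∑ a ∈ S, π a b := fun b =>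
    (h.2.2 b).unique (hasSum_sum_of_ne_finset_zero fun a ha => by_contra fun h => ha (hπ a b h).1)
  have hcost : cost G π = ∑ a ∈ S, ∑ b ∈ T, (G.dist a b : ℝ) * π a b := by
    rw [cost, tsum_eq_sum (s := S ×ˢ T), sum_product]
    rintro ⟨a, b⟩ hab
    by_contra hne
    exact hab (mem_product.mpr (hπ a b (right_ne_zero_of_mul hne)))
  simp_rw [hcost, hμ₁, hμ₂, mul_sum]
  rw [sum_comm (s := T), ← sum_sub_distrib]
  refine sum_le_sum fun a ha => ?_
  rw [← sum_sub_distrib]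
  refine sum_le_sum fun b hb => ?_
  rw [← sub_mul]
  exact mul_le_mul_of_nonneg_right (hf a ha b hb) (h.1 a b)

lemma W1_eq_cost {S T : Finset V} (hS : ∀ a ∉ S, μ₁ a = 0) (hT : ∀ b ∉ T, μ₂ b = 0)
    (hπ : IsPlan μ₁ μ₂ π) {f : V → ℝ} (hf : ∀ a ∈ S, ∀ b ∈ T, f a - f b ≤ G.dist a b)
    (hcost : cost G π ≤ ∑ a ∈ S, f a * μ₁ a - ∑ b ∈ T, f b * μ₂ b) :
    W1 G μ₁ μ₂ = cost G π := by
  refine le_antisymm (csInf_le ⟨0, ?_⟩ ⟨π, hπ, rfl⟩) (le_csInf ⟨_, π, hπ, rfl⟩ ?_)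
  · rintro _ ⟨π', hπ', rfl⟩
    exact tsum_nonneg fun p => mul_nonneg (Nat.cast_nonneg _) (hπ'.1 _ _)
  · rintro _ ⟨π', hπ', rfl⟩
    exact hcost.trans (sum_sub_sum_le_cost hS hT hf hπ')

def bijPlan (S : Finset V) (f : V → V) (w : ℝ) : V → V → ℝ :=
  fun a b => if a ∈ S ∧ b = f a then w else 0

lemma isPlan_bijPlan {S T : Finset V} {f : V → V} (hf : Set.BijOn f S T) {w : ℝ} (hw : 0 ≤ w) :
    IsPlan (fun a => if a ∈ S then w else 0) (fun b => if b ∈ T then w else 0)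
      (bijPlan S f w) := by
  refine ⟨fun a b => by unfold bijPlan; split_ifs <;> simp [hw], fun a => ?_, fun b => ?_⟩
  · by_cases ha : a ∈ S
    · simpa [bijPlan, ha] using hasSum_ite_eq (f a) w
    · simp [bijPlan, ha, hasSum_zero]
  · by_cases hb : b ∈ T
    · simp only [hb, if_true]
      obtain ⟨a, ha, rfl⟩ := hf.surjOn hb
      convert hasSum_ite_eq a w using 2 with a'
      simp only [bijPlan]
      refine if_congr ⟨fun h => hf.injOn h.1 ha h.2.symm, ?_⟩ rfl rfl
      rintro rfl
      exact ⟨ha, rfl⟩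
    · simp only [hb, if_false]
      convert hasSum_zero with a
      exact if_neg fun h : a ∈ S ∧ b = f a => hb (h.2 ▸ hf.mapsTo h.1)

lemma hasSum_cost_bijPlan (S : Finset V) (f : V → V) (w : ℝ) :
    HasSum (fun p : V × V => (G.dist p.1 p.2 : ℝ) * bijPlan S f w p.1 p.2)
      (w * ∑ a ∈ S, (G.dist a (f a) : ℝ)) := by
  have hsupp : ∀ p ∉ S.image fun a => (a, f a),
      (G.dist p.1 p.2 : ℝ) * bijPlan S f w p.1 p.2 = 0 := by
    rintro ⟨a, b⟩ hp
    simp only [bijPlan, mul_ite, mul_zero]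
    exact if_neg fun h => hp (mem_image.mpr ⟨a, h.1, by rw [h.2]⟩)
  convert hasSum_sum_of_ne_finset_zero (L := SummationFilter.unconditional _) hsupp using 1
  rw [sum_image fun a _ b _ h => (Prod.mk.inj h).1, mul_sum]
  exact sum_congr rfl fun a ha => by simp [bijPlan, ha, mul_comm]

end Transport

section RandomWalk

variable {V : Type*} {G : SimpleGraph V} {x y : V} {d : ℕ} {α : ℝ}

section Vertex

variable [Fintype (G.neighborSet x)] (hd : (G.neighborSet x).ncard = d)
include hd

lemma card_neighborFinset_of_ncard : (G.neighborFinset x).card = d := by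
  rw [← hd, Set.ncard_eq_toFinset_card']
  rfl

lemma mu_apply (z : V) :
    mu G α x z = if z = x then α else if z ∈ G.neighborFinset x then (1 - α) / d else 0 := by
  simp [mu, hd]

lemma mu_eq_zero : ∀ z ∉ insert x (G.neighborFinset x), mu G α x z = 0 := by
  intro z hz
  rw [mem_insert, not_or] at hz
  rw [mu_apply hd, if_neg hz.1, if_neg hz.2]

lemma sum_mul_mu (f : V → ℝ) :
    ∑ z ∈ insert x (G.neighborFinset x), f z * mu G α x z =
      α * f x + (1 - α) / d * ∑ z ∈ G.neighborFinset x, f z := by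
  rw [sum_insert (by simp), mul_sum, mu_apply hd, if_pos rfl, mul_comm]
  congr 1
  refine sum_congr rfl fun z hz => ?_
  rw [mu_apply hd, if_neg (by rintro rfl; simp at hz), if_pos hz, mul_comm]

lemma mu_zero_eq : mu G 0 x = fun a => if a ∈ G.neighborFinset x then 1 / (d : ℝ) else 0 := by
  ext a
  rw [mu_apply hd]
  split_ifs with h h' <;> simp_all

lemma mu_eq_add (hadj : G.Adj x y) :
    mu G α x = (fun a => if a ∈ (G.neighborFinset x).erase y then (1 - α) / d else 0) +
      (fun a => if a ∈ ({x, y} : Finset V) then (1 - α) / d else 0) +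
      (fun a => if a ∈ ({x} : Finset V) then α - (1 - α) / d else 0) := by
  ext a
  simp only [Pi.add_apply, mu_apply hd, mem_erase, mem_insert, mem_singleton]
  by_cases hax : a = x
  · simp [hax]
  by_cases hay : a = y
  · simp [hay, hadj.ne', hadj]
  · simp [hax, hay]

end Vertex

end RandomWalk

section Curvature

variable {V : Type*} {G : SimpleGraph V} {x y : V} {d : ℕ}
  [Fintype (G.neighborSet x)] [Fintype (G.neighborSet y)]

lemma card_erase_neighborFinset_eq (hadj : G.Adj x y) (hdx : (G.neighborSet x).ncard = d)
    (hdy : (G.neighborSet y).ncard = d) :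
    ((G.neighborFinset x).erase y).card = ((G.neighborFinset y).erase x).card := by
  rw [card_erase_of_mem (by simpa using hadj), card_erase_of_mem (by simpa using hadj.symm),
    card_neighborFinset_of_ncard hdx, card_neighborFinset_of_ncard hdy]

theorem W1_mu_zero (hconn : G.Connected) (hdx : (G.neighborSet x).ncard = d)
    (hdy : (G.neighborSet y).ncard = d) :
    W1 G (mu G 0 x) (mu G 0 y) =
      minMatchingCost G.dist (G.neighborFinset x) (G.neighborFinset y) / d := by
  have hcard : (G.neighborFinset x).card = (G.neighborFinset y).card := by
    rw [card_neighborFinset_of_ncard hdx, card_neighborFinset_of_ncard hdy]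
  obtain ⟨ψ, hψ, hψcost⟩ := exists_matchingCost_eq_min (c := G.dist) hcard
  obtain ⟨g, hlip, hg⟩ := exists_lipschitz_potential hconn hcard
  have hπ := isPlan_bijPlan hψ (w := 1 / d) (by positivity)
  rw [← mu_zero_eq hdx, ← mu_zero_eq hdy] at hπ
  have hcost : cost G (bijPlan (G.neighborFinset x) ψ (1 / d)) =
      minMatchingCost G.dist (G.neighborFinset x) (G.neighborFinset y) / d := by
    rw [cost, (hasSum_cost_bijPlan _ _ _).tsum_eq, ← hψcost, matchingCost, Nat.cast_sum]
    ring
  rw [← hcost]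
  refine W1_eq_cost (mu_eq_zero hdx) (mu_eq_zero hdy) hπ (f := fun v => (g v : ℝ))
    (fun a _ b _ => by exact_mod_cast hlip a b) ?_
  have hg' : (minMatchingCost G.dist (G.neighborFinset x) (G.neighborFinset y) : ℝ) =
      ∑ a ∈ G.neighborFinset x, (g a : ℝ) - ∑ b ∈ G.neighborFinset y, (g b : ℝ) := by
    exact_mod_cast hg.symm
  rw [sum_mul_mu hdx, sum_mul_mu hdy, hcost, hg']
  exact le_of_eq (by ring)

theorem W1_mu_of_adj (hconn : G.Connected) (hadj : G.Adj x y)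
    (hdx : (G.neighborSet x).ncard = d) (hdy : (G.neighborSet y).ncard = d) {α : ℝ} (hα : α ≤ 1)
    (hαd : (1 - α) / d ≤ α) :
    W1 G (mu G α x) (mu G α y) = α + (1 - α) / d * (minMatchingCost G.dist
      ((G.neighborFinset x).erase y) ((G.neighborFinset y).erase x) - 1) := by
  set w := (1 - α) / d
  set C := minMatchingCost G.dist ((G.neighborFinset x).erase y) ((G.neighborFinset y).erase x)
  have hw : 0 ≤ w := div_nonneg (by linarith) d.cast_nonneg
  have hcard := card_erase_neighborFinset_eq hadj hdx hdy
  obtain ⟨ψ, hψ, hψcost⟩ := exists_matchingCost_eq_min (c := G.dist) hcard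
  obtain ⟨g, hlip, hg⟩ := exists_lipschitz_potential hconn hcard
  -- Transport `N(x) \ {y}` to `N(y) \ {x}` optimally, keep the mass `w` at `x` and at `y`,
  -- and move the remaining mass `α - w` from `x` to `y`.
  have hπ := ((isPlan_bijPlan hψ hw).add (isPlan_bijPlan (S := {x, y}) (T := {x, y}) (f := id)
    (Set.bijOn_id _) hw)).add (isPlan_bijPlan (S := {x}) (T := {y}) (f := fun _ => y) (w := α - w)
    (by simp) (by linarith))
  have hμy := mu_eq_add (α := α) hdy hadj.symm
  rw [pair_comm] at hμy
  rw [← mu_eq_add hdx hadj, ← hμy] at hπ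
  have hψcost' : ∑ a ∈ (G.neighborFinset x).erase y, (G.dist a (ψ a) : ℝ) = C := by
    exact_mod_cast hψcost
  have hcost : cost G (bijPlan ((G.neighborFinset x).erase y) ψ w + bijPlan {x, y} id w +
      bijPlan {x} (fun _ => y) (α - w)) = α + w * (C - 1) := by
    simp only [cost, Pi.add_apply, mul_add]
    rw [(((hasSum_cost_bijPlan _ _ _).add (hasSum_cost_bijPlan _ _ _)).add
      (hasSum_cost_bijPlan _ _ _)).tsum_eq, hψcost']
    simp [SimpleGraph.dist_eq_one_iff_adj.mpr hadj]
    ring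
  rw [← hcost]
  refine W1_eq_cost (mu_eq_zero hdx) (mu_eq_zero hdy) hπ
    (f := fun v => (edgePotential G x y g v : ℝ)) (fun a ha b hb => ?_) ?_
  · have := edgePotential_sub_le_dist hconn hadj hlip (by simpa using ha) (by simpa using hb)
    exact_mod_cast this
  · have hsum : ∑ a ∈ G.neighborFinset x, edgePotential G x y g a -
        ∑ b ∈ G.neighborFinset y, edgePotential G x y g b = (C : ℤ) - 1 := by
      rw [sum_edgePotential_sub_sum hadj, hg]
    have hsum' : ∑ a ∈ G.neighborFinset x, (edgePotential G x y g a : ℝ) -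
        ∑ b ∈ G.neighborFinset y, (edgePotential G x y g b : ℝ) = C - 1 := by
      exact_mod_cast hsum
    rw [hcost, sum_mul_mu hdx, sum_mul_mu hdy, edgePotential_left hadj.ne, edgePotential_right]
    push_cast
    exact le_of_eq (by linear_combination (-w) * hsum')

theorem kappaAlpha_zero_eq (hconn : G.Connected) (hadj : G.Adj x y)
    (hdx : (G.neighborSet x).ncard = d) (hdy : (G.neighborSet y).ncard = d) :
    kappaAlpha G 0 x y =
      1 - minMatchingCost G.dist (G.neighborFinset x) (G.neighborFinset y) / d := by
  rw [kappaAlpha, W1_mu_zero hconn hdx hdy, SimpleGraph.dist_eq_one_iff_adj.mpr hadj, Nat.cast_one,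
    div_one]

theorem kappa_eq (hconn : G.Connected) (hadj : G.Adj x y) (hdx : (G.neighborSet x).ncard = d)
    (hdy : (G.neighborSet y).ncard = d) :
    kappa G x y = 1 - (minMatchingCost G.dist ((G.neighborFinset x).erase y)
      ((G.neighborFinset y).erase x) - 1) / d := by
  have hd : (1 : ℝ) ≤ d := by
    rw [← card_neighborFinset_of_ncard hdx]
    exact_mod_cast card_pos.mpr ⟨y, by simpa using hadj⟩
  refine Filter.Tendsto.limUnder_eq (tendsto_const_nhds.congr' ?_)
  filter_upwards [Ioo_mem_nhdsLT (by norm_num : (1 / 2 : ℝ) < 1)] with α hα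
  have hαd : (1 - α) / d ≤ α := by
    rw [div_le_iff₀ (by linarith)]
    nlinarith [hα.1]
  have h1α : 1 - α ≠ 0 := by linarith [hα.2]
  rw [kappaAlpha, W1_mu_of_adj hconn hadj hdx hdy hα.2.le hαd,
    SimpleGraph.dist_eq_one_iff_adj.mpr hadj]
  field_simp
  ring

lemma abs_minMatchingCost_sub_erase_le_one (hconn : G.Connected) (hadj : G.Adj x y)
    (hcard : ((G.neighborFinset x).erase y).card = ((G.neighborFinset y).erase x).card) :
    |(minMatchingCost G.dist (G.neighborFinset x) (G.neighborFinset y) : ℤ) -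
      minMatchingCost G.dist ((G.neighborFinset x).erase y) ((G.neighborFinset y).erase x)|
      ≤ 1 := by
  have hle := minMatchingCost_insert_le hconn (notMem_erase y _) (notMem_erase x _) hcard
  have hge := minMatchingCost_le_insert hconn (notMem_erase y _) (notMem_erase x _) hcard
  rw [insert_erase (by simpa using hadj), insert_erase (by simpa using hadj.symm),
    SimpleGraph.dist_eq_one_iff_adj.mpr hadj.symm] at hle hge
  rw [abs_le]
  constructor <;> omega

end Curvature

end OllivierRicci

/-- κ₀(x,y) = κ(x,y) − c/d for some c ∈ {0,1,2}. -/
theorem OllivierRicci.kappaZero_eq_kappa_sub_c {V : Type*} (G : SimpleGraph V)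
    (hlf : G.LocallyFinite) (hconn : G.Connected) (x y : V) (hadj : G.Adj x y)
    (d : ℕ) (hdx : (G.neighborSet x).ncard = d) (hdy : (G.neighborSet y).ncard = d) :
    ∃ c : ℝ, c ∈ ({0, 1, 2} : Set ℝ) ∧
      OllivierRicci.kappaAlpha G 0 x y = OllivierRicci.kappa G x y - c / d := by
  have := hlf
  have hC := abs_le.mp (abs_minMatchingCost_sub_erase_le_one hconn hadj
    (card_erase_neighborFinset_eq hadj hdx hdy))
  set C₀ := minMatchingCost G.dist (G.neighborFinset x) (G.neighborFinset y)
  set C₁ := minMatchingCost G.dist ((G.neighborFinset x).erase y) ((G.neighborFinset y).erase x)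
  refine ⟨((C₀ + 1 - C₁ : ℤ) : ℝ), ?_, ?_⟩
  · rcases (by omega : (C₀ : ℤ) + 1 - C₁ = 0 ∨ (C₀ : ℤ) + 1 - C₁ = 1 ∨ (C₀ : ℤ) + 1 - C₁ = 2)
      with h | h | h <;> simp [h]
  · rw [kappaAlpha_zero_eq hconn hadj hdx hdy, kappa_eq hconn hadj hdx hdy]
    push_cast
    ring
end
end
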